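/- arXiv:1310.4736 — 4 statements merged into one kernel-verified Lean document; each statement's English description precedes it below -/
import Mathlib

section
/- The function Ord : G(k) → ℕ ∪ {∞} assigning to a marked group (G, s_1, ..., s_k) the order of the last generator s_k is continuous, where ℕ ∪ {∞} carries the topology of the one-point compactification of ℕ. -/
/-- The space `𝒩(k)` of normal subgroups of the free group `F_k`. -/
def MarkedNormal (k : ℕ) : Type := {N : Subgroup (FreeGroup (Fin k)) // N.Normal}

open Classical in
/-- The characteristic function `χ_N ∈ {0,1}^{F_k}` of a normal subgroup. -/
noncomputable def chi (k : ℕ) (N : MarkedNormal k) : FreeGroup (Fin k) → Bool :=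
  fun g => decide (g ∈ N.1)

/-- The Cayley topology on `𝒩(k)`: the topology of pointwise convergence of
characteristic functions. -/
noncomputable instance cayleyTopology (k : ℕ) : TopologicalSpace (MarkedNormal k) :=
  TopologicalSpace.induced (chi k) inferInstance

open Classical in
/-- `Ord(G, s₁, …, s_k)`: the order of the generator `s_i` of the marked group
`F_k/N`, as an element of the one-point compactification `ℕ ∪ {∞}`. -/
noncomputable def MarkedOrd (k : ℕ) (i : Fin k) (N : MarkedNormal k) : OnePoint ℕ :=
  letI := N.2
  if orderOf (QuotientGroup.mk (FreeGroup.of i) : FreeGroup (Fin k) ⧸ N.1) = 0 then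
    OnePoint.infty
  else
    ((orderOf (QuotientGroup.mk (FreeGroup.of i) : FreeGroup (Fin k) ⧸ N.1) : ℕ) : OnePoint ℕ)

/-!
A map into the one-point compactification of a discrete space is continuous as soon as its
fibres over the points of that space are clopen: an open set avoiding `∞` is a union of such
points, and an open set containing `∞` misses only finitely many. The fibre of `Ord` over
`n > 0` is `{N | aₖⁿ ∈ N} ∩ ⋂_{0 < m < n} {N | aₖᵐ ∉ N}`, a finite Boolean combination of the
clopen sets `{N | g ∈ N}`, and the fibre over `0` is empty.
-/

namespace OnePoint

variable {X α : Type*} [TopologicalSpace X] [TopologicalSpace α] [DiscreteTopology α]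

theorem continuous_of_isClopen_preimage_coe {f : X → OnePoint α}
    (h : ∀ a : α, IsClopen (f ⁻¹' {(a : OnePoint α)})) : Continuous f := by
  refine continuous_def.2 fun s hs => ?_
  by_cases hinf : ∞ ∈ s
  · have hfin : ((↑) ⁻¹' s : Set α)ᶜ.Finite :=
      ((isOpen_iff_of_mem hinf).1 hs).2.finite_of_discrete
    have hpre : f ⁻¹' s = (⋃ a ∈ ((↑) ⁻¹' s : Set α)ᶜ, f ⁻¹' {(a : OnePoint α)})ᶜ := by
      ext x
      simp only [Set.mem_preimage, Set.mem_compl_iff, Set.mem_iUnion, Set.mem_singleton_iff]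
      generalize f x = y
      induction y using OnePoint.rec <;> simp [hinf]
    rw [hpre]
    exact (hfin.isClosed_biUnion fun a _ => (h a).1).isOpen_compl
  · have hpre : f ⁻¹' s = ⋃ a ∈ ((↑) ⁻¹' s : Set α), f ⁻¹' {(a : OnePoint α)} := by
      ext x
      simp only [Set.mem_preimage, Set.mem_iUnion, Set.mem_singleton_iff]
      generalize f x = y
      induction y using OnePoint.rec <;> simp [hinf]
    rw [hpre]
    exact isOpen_biUnion fun a _ => (h a).2

end OnePoint

namespace MarkedNormal

variable {k : ℕ}

instance (N : MarkedNormal k) : N.1.Normal := N.2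

theorem isClopen_setOf_mem (g : FreeGroup (Fin k)) :
    IsClopen {N : MarkedNormal k | g ∈ N.1} := by
  have hset : {N : MarkedNormal k | g ∈ N.1} = (fun N => chi k N g) ⁻¹' {true} := by
    ext N
    simp [chi]
  rw [hset]
  exact (isClopen_discrete {true}).preimage
    ((continuous_apply g).comp (continuous_induced_dom (f := chi k)))

theorem coe_pow_eq_one_iff (N : MarkedNormal k) (g : FreeGroup (Fin k)) (m : ℕ) :
    (g : FreeGroup (Fin k) ⧸ N.1) ^ m = 1 ↔ g ^ m ∈ N.1 := by
  rw [← QuotientGroup.mk_pow, QuotientGroup.eq_one_iff]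

theorem isClopen_setOf_orderOf_eq (g : FreeGroup (Fin k)) {n : ℕ} (hn : 0 < n) :
    IsClopen {N : MarkedNormal k | orderOf (g : FreeGroup (Fin k) ⧸ N.1) = n} := by
  have hset : {N : MarkedNormal k | orderOf (g : FreeGroup (Fin k) ⧸ N.1) = n} =
      {N | g ^ n ∈ N.1} ∩ ⋂ m ∈ Finset.Ioo 0 n, {N | g ^ m ∈ N.1}ᶜ := by
    ext N
    simp [orderOf_eq_iff hn, coe_pow_eq_one_iff, and_comm]
  rw [hset]
  exact (isClopen_setOf_mem _).inter
    (isClopen_biInter_finset fun m _ => (isClopen_setOf_mem _).compl)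

end MarkedNormal

theorem markedOrd_eq_coe_iff {k : ℕ} (i : Fin k) (N : MarkedNormal k) (n : ℕ) :
    MarkedOrd k i N = n ↔
      0 < n ∧ orderOf (FreeGroup.of i : FreeGroup (Fin k) ⧸ N.1) = n := by
  unfold MarkedOrd
  split_ifs with h
  · simp only [OnePoint.infty_ne_coe, false_iff]
    omega
  · rw [OnePoint.coe_eq_coe]
    omega

/-- The function `Ord : 𝒢(k) → ℕ ∪ {∞}` assigning to a marked group the order of a
marked generator is continuous, where `ℕ ∪ {∞}` carries the topology of the one-point
compactification of `ℕ`. -/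
theorem ord_continuous (k : ℕ) (i : Fin k) :
    Continuous fun N : MarkedNormal k => MarkedOrd k i N := by
  refine OnePoint.continuous_of_isClopen_preimage_coe fun n => ?_
  rcases Nat.eq_zero_or_pos n with rfl | hn
  · convert isClopen_empty
    ext N
    simp [markedOrd_eq_coe_iff]
  · convert MarkedNormal.isClopen_setOf_orderOf_eq (FreeGroup.of i) hn using 1
    ext N
    simp [markedOrd_eq_coe_iff, hn]
end

section
/- Let π : F → G be a surjective group homomorphism with kernel N, and let ψ be a positive definite function on F with ψ(h) = 1 for every h ∈ N. Then there exists a positive definite function φ on G such that ψ = φ ∘ π. -/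
open scoped ComplexOrder

/-- A function `ψ : G → ℂ` is positive definite if all Hermitian sums
`Σ_{i,j} conj(α_j) α_i ψ(f_j⁻¹ f_i)` are nonnegative. -/
def IsPositiveDefinite {G : Type*} [Group G] (φ : G → ℂ) : Prop :=
  ∀ (n : ℕ) (g : Fin n → G) (α : Fin n → ℂ),
    0 ≤ ∑ i, ∑ j, (starRingEnd ℂ) (α j) * α i * φ ((g j)⁻¹ * g i)

/-- Let `π : F → G` be a surjective group homomorphism with kernel `N`, and let `ψ` be
a positive definite function on `F` with `ψ(h) = 1` for every `h ∈ N`.  Then `ψ`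
descends: there is a positive definite function `φ` on `G` with `ψ = φ ∘ π`. -/
theorem isPositiveDefinite_descend {F G : Type*} [Group F] [Group G] (π : F →* G)
    (hsurj : Function.Surjective π) (ψ : F → ℂ) (hψ : IsPositiveDefinite ψ)
    (hker : ∀ h ∈ π.ker, ψ h = 1) :
    ∃ φ : G → ℂ, IsPositiveDefinite φ ∧ ψ = φ ∘ π := by
  classical
  have h1 : ψ 1 = 1 := hker 1 (one_mem _)
  -- ψ x⁻¹ = conj (ψ x)
  have hconj : ∀ x : F, ψ x⁻¹ = (starRingEnd ℂ) (ψ x) := by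
    intro x
    have H : ∀ t : ℂ, 0 ≤ (starRingEnd ℂ) t * t * ψ 1 + (starRingEnd ℂ) t * ψ x
        + t * ψ x⁻¹ + ψ 1 := by
      intro t
      have := hψ 2 ![1, x] ![t, 1]
      simpa [Fin.sum_univ_two, add_assoc, add_comm, add_left_comm, mul_comm,
        mul_assoc, mul_left_comm] using this
    have H1 := H 1
    have HI := H Complex.I
    rw [Complex.le_def] at H1 HI
    have h1im : (ψ 1).im = 0 := by
      have := hψ 1 ![1] ![1]
      rw [Complex.le_def] at this
      simpa using this.2.symm
    have e1 := H1.2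
    have e2 := HI.2
    simp [Complex.ext_iff, Complex.add_im, Complex.mul_im, Complex.mul_re, h1im] at e1 e2 ⊢
    constructor <;> linarith
  -- key: ψ constant on fibers of π
  have key : ∀ a b : F, π a = π b → ψ a = ψ b := by
    intro a b hab
    have hn : a⁻¹ * b ∈ π.ker := by
      simp [MonoidHom.mem_ker, hab]
    set n := a⁻¹ * b with hn'
    set d : ℂ := ψ a - ψ b with hd
    have H : 0 ≤ (starRingEnd ℂ) (-d) * (-d) * ψ 1 + (starRingEnd ℂ) (-d) * ψ a
        + (-d) * ψ a⁻¹ + (starRingEnd ℂ) (-d) * (-1) * ψ b + (-d) * (-1) * ψ b⁻¹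
        + ψ 1 + ψ 1 + (-1) * ψ n + (-1) * ψ n⁻¹ := by
      have := hψ 3 ![1, a, b] ![-d, 1, -1]
      have e1 : a⁻¹ * b = n := rfl
      have e2 : b⁻¹ * a = n⁻¹ := by rw [hn']; group
      simpa [Fin.sum_univ_three, e1, e2, add_assoc, add_comm, add_left_comm, mul_comm,
        mul_assoc, mul_left_comm] using this
    have hψn : ψ n = 1 := hker n hn
    have hψn' : ψ n⁻¹ = 1 := hker n⁻¹ (inv_mem hn)
    rw [hconj a, hconj b, h1, hψn, hψn'] at H
    have : 0 ≤ (-(Complex.normSq d) : ℂ) := by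
      convert H using 1
      simp [Complex.normSq_eq_conj_mul_self, hd]
      ring
    rw [Complex.le_def] at this
    have : Complex.normSq d ≤ 0 := by simpa using this.1
    have : d = 0 := by
      have := le_antisymm this (Complex.normSq_nonneg d)
      simpa [Complex.normSq_eq_zero] using this
    rw [hd] at this
    exact sub_eq_zero.mp this
  let s : G → F := Function.surjInv hsurj
  have hs : ∀ g, π (s g) = g := Function.surjInv_eq hsurj
  refine ⟨ψ ∘ s, ?_, ?_⟩
  · intro m g α
    have : ∀ i j : Fin m, (ψ ∘ s) ((g j)⁻¹ * g i) = ψ ((s (g j))⁻¹ * s (g i)) := by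
      intro i j
      exact key _ _ (by simp [hs])
    simp only [this]
    exact hψ m (fun i => s (g i)) α
  · funext f
    exact key f (s (π f)) (by simp [hs])
end

section
/- Let σ^{(m)} ∈ 𝔖_m be the m-cycle [j] ↦ [j+1] on ℤ/mℤ and τ^{(m)} the transposition of [0] and [1]. Let 𝔖 be the group of bijections of ℤ generated by the shift σ and the transposition τ of 0 and 1. Then the sequence of marked groups {(𝔖_m, σ^{(m)}, τ^{(m)})}_m converges to (𝔖, σ, τ) in the Cayley topology. More precisely, for f ∈ F_2 and every m > 2ℓ(f)+2 (ℓ the word length in F_2), f lies in the kernel of F_2 → 𝔖_m if and only if f lies in the kernel of F_2 → 𝔖. -/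
/-- The marking `F_2 → 𝔖_m`: `s ↦ σ^{(m)}` (the `m`-cycle `[j] ↦ [j+1]` on `ℤ/mℤ`)
and `t ↦ τ^{(m)}` (the transposition of `[0]` and `[1]`). -/
noncomputable def symMarking (m : ℕ) : FreeGroup (Fin 2) →* Equiv.Perm (ZMod m) :=
  FreeGroup.lift ![Equiv.addRight (1 : ZMod m), Equiv.swap 0 1]

/-- The marking `F_2 → 𝔖`: `s ↦ σ` (the shift `j ↦ j+1` on `ℤ`) and `t ↦ τ`
(the transposition of `0` and `1`). -/
noncomputable def symMarkingInf : FreeGroup (Fin 2) →* Equiv.Perm ℤ :=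
  FreeGroup.lift ![Equiv.addRight (1 : ℤ), Equiv.swap 0 1]

/-! A word of length `ℓ` in `σ, τ` moves every integer by at most `ℓ`, and on `{|x| > ℓ}` it acts
as a translation, since the orbits there avoid `0` and `1`. If `|x| + ℓ + 2 ≤ m`, the orbit of `x`
meets no integer `≡ 0, 1 (mod m)` other than `0, 1` themselves, so along it reduction modulo `m`
intertwines the actions on `ℤ` and on `ℤ/mℤ`. For `m > 2ℓ + 2` this holds for every `|x| ≤ ℓ + 1`
and for a representative `|x| ≤ m / 2` of every residue. As displacements are `≤ ℓ < m`, the word is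
trivial on `ℤ/mℤ` iff it fixes all `|x| ≤ ℓ + 1`, iff (reading off the translation at `x = ℓ + 1`)
it is trivial on `ℤ`. -/

open Equiv FreeGroup

theorem Int.eq_of_intCast_zmod_eq {m : ℕ} {a b : ℤ} (h : (a : ZMod m) = b)
    (hab : (a - b).natAbs < m) : a = b := by
  rw [ZMod.intCast_eq_intCast_iff_dvd_sub] at h
  have := Int.eq_zero_of_dvd_of_natAbs_lt_natAbs h (by rw [← Int.natAbs_neg]; simpa using hab)
  omega

section ShiftSwap

variable (α : Type*) [AddGroupWithOne α] [DecidableEq α]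

-- `symMarking m` is `lift (shiftSwap (ZMod m))` and `symMarkingInf` is `lift (shiftSwap ℤ)`.
def shiftSwap : Fin 2 → Perm α := ![Equiv.addRight 1, swap 0 1]

def shiftSwapLetter (p : Fin 2 × Bool) : Perm α :=
  cond p.2 (shiftSwap α p.1) (shiftSwap α p.1)⁻¹

variable {α}

theorem lift_shiftSwap_mk_cons_apply (p : Fin 2 × Bool) (w : List (Fin 2 × Bool)) (x : α) :
    lift (shiftSwap α) (mk (p :: w)) x =
      shiftSwapLetter α p (lift (shiftSwap α) (mk w) x) := by
  simp [lift_mk, shiftSwapLetter, Perm.mul_apply]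

theorem exists_shiftSwapLetter_apply_eq_add (p : Fin 2 × Bool) :
    ∃ c : ℤ, ∀ y : α, y ≠ 0 → y ≠ 1 → shiftSwapLetter α p y = y + c := by
  obtain ⟨i, b⟩ := p
  fin_cases i <;> cases b
  · exact ⟨-1, fun y _ _ => by simp [shiftSwapLetter, shiftSwap]⟩
  · exact ⟨1, fun y _ _ => by simp [shiftSwapLetter, shiftSwap]⟩
  all_goals exact ⟨0, fun y h0 h1 => by
    simp [shiftSwapLetter, shiftSwap, swap_apply_of_ne_of_ne h0 h1]⟩

theorem intCast_shiftSwapLetter_apply (p : Fin 2 × Bool) (y : ℤ)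
    (h0 : (y : α) = 0 → y = 0) (h1 : (y : α) = 1 → y = 1) :
    ((shiftSwapLetter ℤ p y : ℤ) : α) = shiftSwapLetter α p y := by
  obtain ⟨i, b⟩ := p
  fin_cases i <;> cases b
  · simp [shiftSwapLetter, shiftSwap]
  · simp [shiftSwapLetter, shiftSwap]
  all_goals
    by_cases hy0 : y = 0
    · simp [shiftSwapLetter, shiftSwap, hy0]
    by_cases hy1 : y = 1
    · simp [shiftSwapLetter, shiftSwap, hy1]
    simp [shiftSwapLetter, shiftSwap, swap_apply_of_ne_of_ne hy0 hy1,
      swap_apply_of_ne_of_ne (mt h0 hy0) (mt h1 hy1)]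

end ShiftSwap

theorem natAbs_shiftSwapLetter_sub_le (p : Fin 2 × Bool) (y : ℤ) :
    (shiftSwapLetter ℤ p y - y).natAbs ≤ 1 := by
  obtain ⟨i, b⟩ := p
  fin_cases i <;> cases b <;> simp [shiftSwapLetter, shiftSwap, swap_apply_def] <;>
    split_ifs <;> omega

theorem natAbs_lift_shiftSwap_mk_sub_le (w : List (Fin 2 × Bool)) (x : ℤ) :
    (lift (shiftSwap ℤ) (mk w) x - x).natAbs ≤ w.length := by
  induction w with
  | nil => simp
  | cons p w ih =>
    rw [lift_shiftSwap_mk_cons_apply, List.length_cons]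
    have := natAbs_shiftSwapLetter_sub_le p (lift (shiftSwap ℤ) (mk w) x)
    omega

theorem exists_lift_shiftSwap_mk_apply_eq_add (w : List (Fin 2 × Bool)) :
    ∃ c : ℤ, ∀ x : ℤ, w.length + 1 ≤ x.natAbs → lift (shiftSwap ℤ) (mk w) x = x + c := by
  induction w with
  | nil => exact ⟨0, fun x _ => by simp⟩
  | cons p w ih =>
    obtain ⟨c, hc⟩ := ih
    obtain ⟨d, hd⟩ := exists_shiftSwapLetter_apply_eq_add (α := ℤ) p
    refine ⟨c + d, fun x hx => ?_⟩
    rw [List.length_cons] at hx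
    have hmove := natAbs_lift_shiftSwap_mk_sub_le w x
    rw [lift_shiftSwap_mk_cons_apply, hd _ (by omega) (by omega), hc x (by omega)]
    push_cast
    ring

theorem lift_shiftSwap_zmod_mk_intCast {m : ℕ} (w : List (Fin 2 × Bool)) (x : ℤ)
    (h : x.natAbs + w.length + 2 ≤ m) :
    lift (shiftSwap (ZMod m)) (mk w) x = ((lift (shiftSwap ℤ) (mk w) x : ℤ) : ZMod m) := by
  induction w with
  | nil => simp
  | cons p w ih =>
    rw [List.length_cons] at h
    set y := lift (shiftSwap ℤ) (mk w) x
    have hmove := natAbs_lift_shiftSwap_mk_sub_le w x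
    rw [lift_shiftSwap_mk_cons_apply, lift_shiftSwap_mk_cons_apply, ih (by omega)]
    refine (intCast_shiftSwapLetter_apply p y (fun h0 => ?_) (fun h1 => ?_)).symm
    · exact Int.eq_of_intCast_zmod_eq (b := 0) (by simpa using h0) (by omega)
    · exact Int.eq_of_intCast_zmod_eq (b := 1) (by simpa using h1) (by omega)

theorem lift_shiftSwap_int_mk_apply_eq_self {m : ℕ} {w : List (Fin 2 × Bool)}
    (hm : 2 * w.length + 2 < m) (h : lift (shiftSwap (ZMod m)) (mk w) = 1) (x : ℤ)
    (hx : x.natAbs ≤ w.length + 1) : lift (shiftSwap ℤ) (mk w) x = x := by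
  have hcast := lift_shiftSwap_zmod_mk_intCast (m := m) w x (by omega)
  have hmove := natAbs_lift_shiftSwap_mk_sub_le w x
  exact Int.eq_of_intCast_zmod_eq (hcast.symm.trans (DFunLike.congr_fun h _)) (by omega)

theorem lift_shiftSwap_int_mk_eq_one {m : ℕ} {w : List (Fin 2 × Bool)}
    (hm : 2 * w.length + 2 < m) (h : lift (shiftSwap (ZMod m)) (mk w) = 1) :
    lift (shiftSwap ℤ) (mk w) = 1 := by
  obtain ⟨c, hc⟩ := exists_lift_shiftSwap_mk_apply_eq_add w
  have hfixed := lift_shiftSwap_int_mk_apply_eq_self hm h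
  have hc0 : c = 0 := by
    have := (hc (w.length + 1) (by omega)).symm.trans (hfixed (w.length + 1) (by omega))
    omega
  ext x
  by_cases hx : x.natAbs ≤ w.length + 1
  · exact hfixed x hx
  · rw [hc x (by omega), hc0, add_zero, Perm.one_apply]

theorem lift_shiftSwap_zmod_mk_eq_one {m : ℕ} {w : List (Fin 2 × Bool)}
    (hm : 2 * w.length + 2 < m) (h : lift (shiftSwap ℤ) (mk w) = 1) :
    lift (shiftSwap (ZMod m)) (mk w) = 1 := by
  have : NeZero m := ⟨by omega⟩
  ext z
  have hz := z.natAbs_valMinAbs_le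
  have hcast := lift_shiftSwap_zmod_mk_intCast (m := m) w z.valMinAbs (by omega)
  simpa [h, z.coe_valMinAbs] using hcast

theorem mem_ker_symMarking_iff {m : ℕ} {f : FreeGroup (Fin 2)}
    (hm : 2 * FreeGroup.norm f + 2 < m) : f ∈ (symMarking m).ker ↔ f ∈ symMarkingInf.ker := by
  show f ∈ (lift (shiftSwap (ZMod m))).ker ↔ f ∈ (lift (shiftSwap ℤ)).ker
  rw [← mk_toWord (x := f)]
  exact ⟨lift_shiftSwap_int_mk_eq_one hm, lift_shiftSwap_zmod_mk_eq_one hm⟩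

theorem MarkedNormal.tendsto_nhds {k : ℕ} {ι : Type*} {l : Filter ι} {N : ι → MarkedNormal k}
    {N₀ : MarkedNormal k} (h : ∀ g, ∀ᶠ i in l, g ∈ (N i).1 ↔ g ∈ N₀.1) :
    Filter.Tendsto N l (nhds N₀) := by
  rw [nhds_induced, Filter.tendsto_comap_iff, tendsto_pi_nhds]
  refine fun g => tendsto_nhds_of_eventually_eq ?_
  filter_upwards [h g] with i hi
  exact decide_eq_decide.mpr hi

/-- The marked symmetric groups `(𝔖_m, σ^{(m)}, τ^{(m)})` converge to `(𝔖, σ, τ)` in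
the Cayley topology; more precisely, for `f ∈ F_2` and every `m > 2ℓ(f)+2`, `f` lies in
the kernel of `F_2 → 𝔖_m` iff it lies in the kernel of `F_2 → 𝔖`. -/
theorem sym_marked_groups_tendsto :
    (∀ f : FreeGroup (Fin 2), ∀ m : ℕ, 2 * FreeGroup.norm f + 2 < m →
      (f ∈ (symMarking m).ker ↔ f ∈ symMarkingInf.ker)) ∧
    Filter.Tendsto
      (fun m => (⟨(symMarking m).ker, (symMarking m).normal_ker⟩ : MarkedNormal 2))
      Filter.atTop (nhds (X := MarkedNormal 2) ⟨symMarkingInf.ker, symMarkingInf.normal_ker⟩) := by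
  refine ⟨fun f m hm => mem_ker_symMarking_iff hm, MarkedNormal.tendsto_nhds fun f => ?_⟩
  filter_upwards [Filter.eventually_gt_atTop (2 * FreeGroup.norm f + 2)] with m hm
  exact mem_ker_symMarking_iff hm
end

section
/- Let G be a finite group, Y a Banach space, Ỹ = ℓ²(ℕ, Y), and π the left regular representation of G on ℓ²(G, Ỹ). For any nonzero η ∈ ℓ²(G, Ỹ)₀ (the subspace of functions with zero sum), sup_{γ ∈ G} ‖η − π(γ)η‖ > ‖η‖. -/
/-- `ℓ²(G, Ỹ)` with `Ỹ = ℓ²(ℕ, Y)`, for a finite group `G`. -/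
noncomputable abbrev L2G (G Y : Type*) [Fintype G] [NormedAddCommGroup Y] :=
  PiLp 2 (fun _ : G => lp (fun _ : ℕ => Y) 2)

/-- The left regular representation: `(π(γ)ξ)(x) = ξ(γ⁻¹ x)`. -/
noncomputable def leftReg {G Y : Type*} [Group G] [Fintype G] [NormedAddCommGroup Y]
    (γ : G) (ξ : L2G G Y) : L2G G Y := WithLp.toLp 2 (fun x => ξ (γ⁻¹ * x))

/-!
The vectors `π(γ)η` sum to `0` when `η` has zero sum, so the displacements `η - π(γ)η`
sum to `|G| • η`. Their norms therefore average at least `‖η‖`; since the displacement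
at `γ = 1` vanishes, some other one must exceed `‖η‖`.
-/

theorem exists_norm_lt_norm_sub_of_sum_eq_zero {ι E : Type*} [Fintype ι]
    [NormedAddCommGroup E] [NormedSpace ℝ E] {f : ι → E} (hf : ∑ i, f i = 0)
    {x : E} (hx : x ≠ 0) {i₀ : ι} (hi₀ : f i₀ = x) : ∃ i, ‖x‖ < ‖x - f i‖ := by
  by_contra! h
  have hsum : ∑ i, (x - f i) = (Fintype.card ι : ℝ) • x := by
    rw [Finset.sum_sub_distrib, hf, sub_zero, Finset.sum_const, Finset.card_univ,
      Nat.cast_smul_eq_nsmul]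
  have hlt : ∑ i, ‖x - f i‖ < ∑ _i : ι, ‖x‖ :=
    Finset.sum_lt_sum (fun i _ => h i) ⟨i₀, Finset.mem_univ _, by simpa [hi₀] using hx⟩
  have : (Fintype.card ι : ℝ) * ‖x‖ < (Fintype.card ι : ℝ) * ‖x‖ := calc
    _ = ‖∑ i, (x - f i)‖ := by rw [hsum, norm_smul, Real.norm_natCast]
    _ ≤ ∑ i, ‖x - f i‖ := norm_sum_le _ _
    _ < ∑ _i : ι, ‖x‖ := hlt
    _ = _ := by simp
  exact lt_irrefl _ this

section LeftRegular

variable {G Y : Type*} [Group G] [Fintype G] [NormedAddCommGroup Y]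

@[simp]
theorem leftReg_apply (γ : G) (ξ : L2G G Y) (x : G) : leftReg γ ξ x = ξ (γ⁻¹ * x) := rfl

@[simp]
theorem leftReg_one (ξ : L2G G Y) : leftReg 1 ξ = ξ := by
  ext x : 1
  simp

theorem sum_leftReg_eq_zero {ξ : L2G G Y} (hξ : ∑ x, ξ x = 0) : ∑ γ, leftReg γ ξ = 0 := by
  ext x : 1
  rw [WithLp.ofLp_sum, Finset.sum_apply]
  simp only [WithLp.ofLp_zero, Pi.zero_apply, leftReg_apply]
  rw [← hξ]
  exact ((Equiv.inv G).trans (Equiv.mulRight x)).sum_comp (fun y => ξ y)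

end LeftRegular

theorem displacement_gt_norm_general {G Y : Type*} [Group G] [Fintype G]
    [NormedAddCommGroup Y] [NormedSpace ℝ Y]
    (η : L2G G Y) (hzero : ∑ x : G, η x = 0) (hne : η ≠ 0) :
    ‖η‖ < ⨆ γ : G, ‖η - leftReg γ η‖ := by
  obtain ⟨γ, hγ⟩ := exists_norm_lt_norm_sub_of_sum_eq_zero (sum_leftReg_eq_zero hzero) hne
    (leftReg_one η)
  exact hγ.trans_le
    (le_ciSup (f := fun γ => ‖η - leftReg γ η‖) (Finite.bddAbove_range _) γ)

/-- Let `G` be a finite group, `Y` a Banach space, `Ỹ = ℓ²(ℕ,Y)`, and `π` the left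
regular representation on `ℓ²(G,Ỹ)`.  For any nonzero `η` in the zero-sum subspace
`ℓ²(G,Ỹ)₀`, we have `sup_{γ∈G} ‖η − π(γ)η‖ > ‖η‖`. -/
theorem displacement_gt_norm {G Y : Type*} [Group G] [Fintype G]
    [NormedAddCommGroup Y] [NormedSpace ℝ Y] [CompleteSpace Y]
    (η : L2G G Y) (hzero : ∑ x : G, η x = 0) (hne : η ≠ 0) :
    ‖η‖ < ⨆ γ : G, ‖η - leftReg γ η‖ :=
  displacement_gt_norm_general η hzero hne
end
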